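/- arXiv:1606.00041 — 6 statements merged into one kernel-verified Lean document; each statement's English description precedes it below -/
import Mathlib

section
/- Let G be a finite group of order n and t a positive integer. Then the number of elements of G whose order is a multiple of t is either zero or a multiple of the greatest divisor of n that is coprime to t. -/
/-!
Let `π` be the set of primes dividing `t`. Every `x : G` factors uniquely as a commuting product
`u * v` of a `π`-element `u` (a power of `x`) and a `π'`-element `v`, and `t ∣ |x|` iff `t ∣ |u|`.
So the count is `∑ N(C(u))` over the `π`-elements `u` with `t ∣ |u|`, where `N(K)` is the number
of `π'`-elements of `K`. A conjugacy class contributes `|G : C(u)| * N(C(u))`, which is divisible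
by the `π'`-part of `|G|` once the `π'`-part of `|K|` is known to divide `N(K)` for every finite
group `K`. The same decomposition of all of `K` gives `|K| = |Z| * N(K) + ∑ (noncentral classes)`,
where `Z` is the `π`-group of central `π`-elements; the noncentral classes are handled by
induction on `|K|` through the proper centralizers, and `|Z|` is coprime to the `π'`-part.
-/

open Finset

namespace Weisner

/-- `m` is a `π`-number, for `π` the set of primes dividing `t`. -/
def IsPiNumber (t m : ℕ) : Prop := ∀ p, p.Prime → p ∣ m → p ∣ t

theorem isPiNumber_one (t : ℕ) : IsPiNumber t 1 := fun _ hp h => (hp.not_dvd_one h).elim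

theorem IsPiNumber.of_dvd {t m d : ℕ} (hm : IsPiNumber t m) (hd : d ∣ m) : IsPiNumber t d :=
  fun p hp hpd => hm p hp (hpd.trans hd)

theorem IsPiNumber.mul {t a b : ℕ} (ha : IsPiNumber t a) (hb : IsPiNumber t b) :
    IsPiNumber t (a * b) :=
  fun p hp hpab => (hp.dvd_mul.1 hpab).elim (ha p hp) (hb p hp)

theorem IsPiNumber.coprime {t m k : ℕ} (hm : IsPiNumber t m) (hk : k.Coprime t) :
    m.Coprime k :=
  Nat.coprime_of_dvd fun p hp hpm hpk =>
    hp.one_lt.ne' (Nat.eq_one_of_dvd_coprimes hk hpk (hm p hp hpm))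

/-- The largest divisor of `n` coprime to `t`, when `n ≠ 0`. -/
def coprimePart (t n : ℕ) : ℕ := (n.divisors.filter (·.Coprime t)).lcm id

theorem coprimePart_dvd (t n : ℕ) : coprimePart t n ∣ n :=
  Finset.lcm_dvd fun _ he => Nat.dvd_of_mem_divisors (mem_filter.1 he).1

theorem coprime_coprimePart (t n : ℕ) : (coprimePart t n).Coprime t :=
  Nat.Coprime.coprime_dvd_left (Finset.lcm_dvd_prod _ _)
    (Nat.Coprime.prod_left fun _ he => (mem_filter.1 he).2)

theorem dvd_coprimePart {t n e : ℕ} (hn : n ≠ 0) (he : e ∣ n) (het : e.Coprime t) :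
    e ∣ coprimePart t n :=
  Finset.dvd_lcm (f := id) (mem_filter.2 ⟨Nat.mem_divisors.2 ⟨he, hn⟩, het⟩)

theorem coprimePart_mul_dvd (t : ℕ) {a b : ℕ} (hab : a * b ≠ 0) :
    coprimePart t (a * b) ∣ coprimePart t a * coprimePart t b := by
  obtain ⟨e₁, e₂, he₁, he₂, he⟩ := Nat.dvd_mul.1 (coprimePart_dvd t (a * b))
  have hcop := coprime_coprimePart t (a * b)
  rw [← he] at hcop ⊢
  exact mul_dvd_mul
    (dvd_coprimePart (left_ne_zero_of_mul hab) he₁ (Nat.Coprime.coprime_mul_right hcop))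
    (dvd_coprimePart (right_ne_zero_of_mul hab) he₂ (Nat.Coprime.coprime_mul_left hcop))

theorem isPiNumber_div_coprimePart {t n : ℕ} (hn : n ≠ 0) :
    IsPiNumber t (n / coprimePart t n) := by
  intro p hp hpn
  by_contra hpt
  have hc : 0 < coprimePart t n :=
    Nat.pos_of_dvd_of_pos (coprimePart_dvd t n) (Nat.pos_of_ne_zero hn)
  -- `coprimePart t n * p` would be a larger divisor of `n` coprime to `t`
  have h : coprimePart t n * p ∣ coprimePart t n * 1 := by
    rw [mul_one]
    refine dvd_coprimePart hn
      ((mul_dvd_mul_left _ hpn).trans (Nat.mul_div_cancel' (coprimePart_dvd t n)).dvd)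
      (Nat.Coprime.mul_left (coprime_coprimePart t n) ((Nat.Prime.coprime_iff_not_dvd hp).2 hpt))
  exact hp.not_dvd_one (Nat.dvd_of_mul_dvd_mul_left hc h)

theorem coprime_div_coprimePart {t n : ℕ} (hn : n ≠ 0) :
    (n / coprimePart t n).Coprime (coprimePart t n) :=
  (isPiNumber_div_coprimePart hn).coprime (coprime_coprimePart t n)

theorem coprimePart_mul_eq_right {t m k : ℕ} (hm : IsPiNumber t m) (hk : k.Coprime t)
    (hmk : m * k ≠ 0) : coprimePart t (m * k) = k :=
  Nat.dvd_antisymm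
    ((hm.coprime (coprime_coprimePart t _)).symm.dvd_of_dvd_mul_left (coprimePart_dvd t _))
    (dvd_coprimePart hmk (dvd_mul_left k m) hk)

theorem bezout_of_coprime {a b : ℕ} (h : a.Coprime b) :
    (a : ℤ) * a.gcdA b + b * a.gcdB b = 1 := by
  rw [← Nat.gcd_eq_gcd_ab, h.gcd_eq_one, Nat.cast_one]

section Decomposition

variable {G : Type*} [Group G]

theorem mul_zpow_eq_left_of_bezout {u v : G} (h : Commute u v) {a c : ℕ} {A B : ℤ}
    (hu : u ^ a = 1) (hv : v ^ c = 1) (hAB : a * A + c * B = 1) : (u * v) ^ (c * B) = u := by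
  have hu' : u ^ ((a : ℤ) * A) = 1 := by rw [zpow_mul, zpow_natCast, hu, one_zpow]
  rw [h.mul_zpow, zpow_mul v, zpow_natCast, hv, one_zpow, mul_one]
  calc u ^ ((c : ℤ) * B) = u ^ ((a : ℤ) * A) * u ^ ((c : ℤ) * B) := by rw [hu', one_mul]
    _ = u := by rw [← zpow_add, hAB, zpow_one]

/-- The `π`-part of `x`: writing `|x| = a * c` with `c` the `t`-coprime part, it is
`x ^ (c * B)` for a Bézout relation `a * A + c * B = 1`. -/
noncomputable def piPart (t : ℕ) (x : G) : G :=
  x ^ ((coprimePart t (orderOf x) : ℤ) *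
    (orderOf x / coprimePart t (orderOf x)).gcdB (coprimePart t (orderOf x)))

theorem commute_piPart_inv_mul (t : ℕ) (x : G) : Commute (piPart t x) ((piPart t x)⁻¹ * x) :=
  (Commute.refl _).inv_right.mul_right (Commute.self_zpow _ _).symm

variable [Finite G]

theorem isPiNumber_orderOf_piPart (t : ℕ) (x : G) : IsPiNumber t (orderOf (piPart t x)) := by
  have hn := (orderOf_pos x).ne'
  refine (isPiNumber_div_coprimePart hn).of_dvd (orderOf_dvd_of_pow_eq_one ?_)
  rw [piPart, ← zpow_natCast, ← zpow_mul, mul_comm, ← mul_assoc, ← Nat.cast_mul,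
    Nat.div_mul_cancel (coprimePart_dvd t _), zpow_mul, zpow_natCast, pow_orderOf_eq_one,
    one_zpow]

theorem coprime_orderOf_inv_piPart_mul (t : ℕ) (x : G) :
    (orderOf ((piPart t x)⁻¹ * x)).Coprime t := by
  have hn := (orderOf_pos x).ne'
  set c := coprimePart t (orderOf x)
  set a := orderOf x / c
  have hAB := bezout_of_coprime (coprime_div_coprimePart (t := t) hn)
  have hx : (piPart t x)⁻¹ * x = x ^ ((a : ℤ) * a.gcdA c) := by
    rw [inv_mul_eq_iff_eq_mul, piPart, ← zpow_add, add_comm, hAB, zpow_one]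
  refine Nat.Coprime.coprime_dvd_left (orderOf_dvd_of_pow_eq_one ?_)
    (coprime_coprimePart t (orderOf x))
  rw [hx, ← zpow_natCast, ← zpow_mul, mul_comm, ← mul_assoc, ← Nat.cast_mul,
    Nat.mul_div_cancel' (coprimePart_dvd t _), zpow_mul, zpow_natCast, pow_orderOf_eq_one,
    one_zpow]

theorem piPart_mul {t : ℕ} {u v : G} (h : Commute u v) (hu : IsPiNumber t (orderOf u))
    (hv : (orderOf v).Coprime t) : piPart t (u * v) = u := by
  have huv : orderOf (u * v) = orderOf u * orderOf v :=
    h.orderOf_mul_eq_mul_orderOf_of_coprime (hu.coprime hv)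
  have hc : coprimePart t (orderOf (u * v)) = orderOf v := by
    rw [huv]; exact coprimePart_mul_eq_right hu hv (huv ▸ (orderOf_pos _).ne')
  have ha : orderOf (u * v) / orderOf v = orderOf u := by
    rw [huv, Nat.mul_div_cancel _ (orderOf_pos v)]
  rw [piPart, hc, ha]
  exact mul_zpow_eq_left_of_bezout h (pow_orderOf_eq_one u) (pow_orderOf_eq_one v)
    (bezout_of_coprime (hu.coprime hv))

end Decomposition

theorem isPiNumber_card_of_forall {t : ℕ} {K : Type*} [Group K] [Finite K]
    (h : ∀ g : K, IsPiNumber t (orderOf g)) : IsPiNumber t (Nat.card K) := by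
  intro p hp hpK
  have := Fact.mk hp
  obtain ⟨g, hg⟩ := exists_prime_orderOf_dvd_card' p hpK
  exact h g p hp (hg ▸ dvd_rfl)

def centralPiSubgroup (t : ℕ) (H : Type*) [Group H] : Subgroup H where
  carrier := {u | IsPiNumber t (orderOf u) ∧ u ∈ Subgroup.center H}
  one_mem' := ⟨by simpa using isPiNumber_one t, one_mem _⟩
  mul_mem' := fun {u v} ⟨hu, hu'⟩ ⟨hv, hv'⟩ =>
    ⟨(hu.mul hv).of_dvd (hu'.comm v).orderOf_mul_dvd_mul_orderOf, mul_mem hu' hv'⟩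
  inv_mem' := fun ⟨hu, hu'⟩ => ⟨by rwa [orderOf_inv], inv_mem hu'⟩

open scoped Classical

section Counting

variable {G : Type*} [Group G] [Fintype G]

noncomputable def coprimeCentralizerCard (t : ℕ) (u : G) : ℕ :=
  #{v | Commute u v ∧ (orderOf v).Coprime t}

theorem coprimeCentralizerCard_conj (t : ℕ) (g u : G) :
    coprimeCentralizerCard t (g * u * g⁻¹) = coprimeCentralizerCard t u :=
  (Finset.card_equiv (MulAut.conj g).toEquiv fun v => by
    simp [Commute.conj_iff, ← (SemiconjBy.conj_mk g v).orderOf_eq]).symm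

theorem coprimeCentralizerCard_eq_card (t : ℕ) (u : G) :
    coprimeCentralizerCard t u =
      Nat.card {v : Subgroup.centralizer {u} // (orderOf v).Coprime t} := by
  rw [coprimeCentralizerCard, ← Fintype.card_subtype, ← Nat.card_eq_fintype_card]
  refine Nat.card_congr (((Equiv.subtypeEquivRight fun v => ?_).trans
    (Equiv.subtypeSubtypeEquivSubtypeInter (· ∈ Subgroup.centralizer {u})
      fun v => (orderOf v).Coprime t).symm).trans (Equiv.subtypeEquivRight fun v => ?_))
  · rw [Subgroup.mem_centralizer_singleton_iff]
    exact and_congr_left' eq_comm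
  · rw [Subgroup.orderOf_coe]

theorem card_filter_eq_sum_coprimeCentralizerCard (t : ℕ) (P : G → Prop) [DecidablePred P]
    (hP : ∀ u v, Commute u v → IsPiNumber t (orderOf u) → (orderOf v).Coprime t →
      (P (u * v) ↔ P u)) :
    #{x | P x} = ∑ u with IsPiNumber t (orderOf u) ∧ P u, coprimeCentralizerCard t u := by
  have hPx : ∀ x : G, P x ↔ P (piPart t x) := fun x => by
    simpa using hP _ _ (commute_piPart_inv_mul t x) (isPiNumber_orderOf_piPart t x)
      (coprime_orderOf_inv_piPart_mul t x)
  rw [card_eq_sum_card_fiberwise (f := piPart t) (t := {u | IsPiNumber t (orderOf u) ∧ P u})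
    fun x hx => by
      simp only [mem_coe, mem_filter, mem_univ, true_and] at hx ⊢
      exact ⟨isPiNumber_orderOf_piPart t x, (hPx x).1 hx⟩]
  refine sum_congr rfl fun u hu => ?_
  simp only [mem_filter, mem_univ, true_and] at hu
  refine card_nbij' (u⁻¹ * ·) (u * ·) ?_ ?_ ?_ ?_
  · intro x hx
    simp only [mem_coe, mem_filter, mem_univ, true_and] at hx ⊢
    obtain ⟨-, rfl⟩ := hx
    exact ⟨commute_piPart_inv_mul t x, coprime_orderOf_inv_piPart_mul t x⟩
  · intro v hv
    simp only [mem_coe, mem_filter, mem_univ, true_and] at hv ⊢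
    exact ⟨(hP u v hv.1 hu.1 hv.2).2 hu.2, piPart_mul hv.1 hu.1 hv.2⟩
  · intro x _; simp
  · intro v _; simp

theorem dvd_sum_of_conj_invariant {m : ℕ} (f : G → ℕ) (hf : ∀ g u, f (g * u * g⁻¹) = f u)
    (hm : ∀ u, m ∣ (Subgroup.centralizer {u}).index * f u) : m ∣ ∑ u, f u := by
  rw [← sum_fiberwise univ ConjClasses.mk f]
  refine dvd_sum fun κ _ => ?_
  obtain ⟨u, rfl⟩ := ConjClasses.mk_surjective κ
  have hconst : ∀ w ∈ ({w | ConjClasses.mk w = ConjClasses.mk u} : Finset G), f w = f u := by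
    intro w hw
    obtain ⟨g, rfl⟩ :=
      isConj_iff.1 (ConjClasses.mk_eq_mk_iff_isConj.1 (mem_filter.1 hw).2).symm
    exact hf g u
  have hcard :
      #{w | ConjClasses.mk w = ConjClasses.mk u} = (Subgroup.centralizer {u}).index := by
    have : (Subgroup.centralizer {u}).index =
        (Subgroup.centralizer {ConjAct.toConjAct u}).index := rfl
    rw [this, ← ConjAct.stabilizer_eq_centralizer, MulAction.index_stabilizer,
      ConjAct.orbit_eq_carrier_conjClasses, ← Set.ncard_coe_finset]
    congr 1
    ext w
    simp [ConjClasses.mem_carrier_iff_mk_eq]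
  rw [sum_const_nat hconst, hcard]
  exact hm u

theorem dvd_sum_filter_of_conj_invariant {m : ℕ} (p : G → Prop) [DecidablePred p]
    (hp : ∀ g u, p (g * u * g⁻¹) ↔ p u) (f : G → ℕ) (hf : ∀ g u, f (g * u * g⁻¹) = f u)
    (hm : ∀ u, p u → m ∣ (Subgroup.centralizer {u}).index * f u) : m ∣ ∑ u with p u, f u := by
  rw [sum_filter]
  refine dvd_sum_of_conj_invariant _ (fun g u => by simp only [hp, hf]) fun u => ?_
  split_ifs with hu
  · exact hm u hu
  · simp

theorem coprimePart_card_dvd_index_mul (t : ℕ) {u : G} {k : ℕ}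
    (h : coprimePart t (Nat.card (Subgroup.centralizer {u})) ∣ k) :
    coprimePart t (Nat.card G) ∣ (Subgroup.centralizer {u}).index * k := by
  have hG := (Subgroup.centralizer {u}).card_mul_index
  rw [← hG, mul_comm]
  exact (coprimePart_mul_dvd t (by rw [mul_comm, hG]; exact Nat.card_pos.ne')).trans
    (mul_dvd_mul (coprimePart_dvd t _) h)

end Counting

theorem card_eq_card_centralPiSubgroup_mul_add_sum (t : ℕ) (H : Type*) [Group H]
    [Fintype H] :
    Nat.card H = Nat.card (centralPiSubgroup t H) * #{v : H | (orderOf v).Coprime t} +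
      ∑ u with IsPiNumber t (orderOf u) ∧ u ∉ Subgroup.center H, coprimeCentralizerCard t u := by
  have hcentral : ∀ u ∈ Subgroup.center H,
      coprimeCentralizerCard t u = #{v : H | (orderOf v).Coprime t} := by
    intro u hu
    rw [coprimeCentralizerCard]
    congr 1
    ext v
    simp [hu.comm v]
  have hZ : Nat.card (centralPiSubgroup t H) =
      #{u | IsPiNumber t (orderOf u) ∧ u ∈ Subgroup.center H} := by
    rw [← Fintype.card_subtype, ← Nat.card_eq_fintype_card]
    rfl
  have h := card_filter_eq_sum_coprimeCentralizerCard t (fun _ : H => True) (by simp)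
  simp only [and_true, filter_true, card_univ] at h
  rw [Nat.card_eq_fintype_card, h, hZ,
    ← sum_filter_add_sum_filter_not _ (· ∈ Subgroup.center H), filter_filter, filter_filter,
    sum_const_nat fun u hu => hcentral u (mem_filter.1 hu).2.2]

theorem coprimePart_card_dvd_card_coprime (t : ℕ) (H : Type*) [Group H] [Finite H] :
    coprimePart t (Nat.card H) ∣ Nat.card {v : H // (orderOf v).Coprime t} := by
  obtain ⟨n, hn⟩ : ∃ n, Nat.card H = n := ⟨_, rfl⟩
  induction n using Nat.strong_induction_on generalizing H with
  | _ n ih =>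
  have := Fintype.ofFinite H
  rw [Nat.card_eq_fintype_card (α := {v : H // _}), Fintype.card_subtype]
  have hnoncentral : coprimePart t (Nat.card H) ∣
      ∑ u with IsPiNumber t (orderOf u) ∧ u ∉ Subgroup.center H, coprimeCentralizerCard t u := by
    refine dvd_sum_filter_of_conj_invariant
      (fun u => IsPiNumber t (orderOf u) ∧ u ∉ Subgroup.center H) (fun g u => ?_) _
      (coprimeCentralizerCard_conj t) fun u hu => coprimePart_card_dvd_index_mul t ?_
    · rw [← (SemiconjBy.conj_mk g u).orderOf_eq,
        (inferInstance : (Subgroup.center H).Normal).mem_comm_iff, inv_mul_cancel_left]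
    · have hlt : 1 < (Subgroup.centralizer {u}).index :=
        Subgroup.one_lt_index_of_ne_top fun htop => hu.2
          (Subgroup.centralizer_eq_top_iff_subset.1 htop rfl)
      rw [coprimeCentralizerCard_eq_card]
      refine ih _ ?_ _ rfl
      rw [← hn, ← (Subgroup.centralizer {u}).card_mul_index]
      exact (Nat.lt_mul_iff_one_lt_right Nat.card_pos).2 hlt
  have hcop : (Nat.card (centralPiSubgroup t H)).Coprime (coprimePart t (Nat.card H)) :=
    (isPiNumber_card_of_forall fun g => by simpa using g.2.1).coprime (coprime_coprimePart t _)
  have hdvd := coprimePart_dvd t (Nat.card H)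
  conv_rhs at hdvd => rw [card_eq_card_centralPiSubgroup_mul_add_sum t H]
  rw [Nat.dvd_add_left hnoncentral] at hdvd
  exact hcop.symm.dvd_of_dvd_mul_left hdvd

theorem coprimePart_card_dvd_card_dvd_orderOf (t : ℕ) (G : Type*) [Group G] [Finite G] :
    coprimePart t (Nat.card G) ∣ Nat.card {x : G // t ∣ orderOf x} := by
  have := Fintype.ofFinite G
  rw [Nat.card_eq_fintype_card (α := {x : G // _}), Fintype.card_subtype,
    card_filter_eq_sum_coprimeCentralizerCard t (t ∣ orderOf ·) fun u v h hu hv => ?_]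
  · refine dvd_sum_filter_of_conj_invariant _ (fun g u => ?_) _ (coprimeCentralizerCard_conj t)
      fun u _ => coprimePart_card_dvd_index_mul t ?_
    · rw [← (SemiconjBy.conj_mk g u).orderOf_eq]
    · rw [coprimeCentralizerCard_eq_card]
      exact coprimePart_card_dvd_card_coprime t _
  · rw [h.orderOf_mul_eq_mul_orderOf_of_coprime (hu.coprime hv)]
    exact ⟨hv.symm.dvd_of_dvd_mul_right, (Dvd.dvd.mul_right · _)⟩

end Weisner

theorem stmt_4_general (G : Type*) [Group G] [Fintype G] (t : ℕ)
    (d : ℕ) (hd : d ∣ Fintype.card G) (hcop : Nat.Coprime d t) :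
    Nat.card {x : G // t ∣ orderOf x} = 0 ∨ d ∣ Nat.card {x : G // t ∣ orderOf x} := by
  rw [← Nat.card_eq_fintype_card] at hd
  exact Or.inr ((Weisner.dvd_coprimePart Nat.card_pos.ne' hd hcop).trans
    (Weisner.coprimePart_card_dvd_card_dvd_orderOf t G))

/-- Weisner's theorem: in a finite group `G`, the number of elements whose order is a
multiple of `t` is either zero or a multiple of the greatest divisor `d` of `|G|`
that is coprime to `t`. -/
theorem stmt_4 (G : Type*) [Group G] [Fintype G] (t : ℕ) (ht : 0 < t)
    (d : ℕ) (hd : d ∣ Fintype.card G) (hcop : Nat.Coprime d t)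
    (hmax : ∀ e : ℕ, e ∣ Fintype.card G → Nat.Coprime e t → e ∣ d) :
    Nat.card {x : G // t ∣ orderOf x} = 0 ∨ d ∣ Nat.card {x : G // t ∣ orderOf x} :=
  stmt_4_general G t d hd hcop
end

section
/- Let q = 2^(2m+1) with m ≥ 1, and let W be the group of matrices w(a,b) over GF(q) (as in the Suzuki group's Sylow 2-subgroup) with multiplication w(a,b)·w(c,d) = w(a+c, b+d+π(a)·c), where π(x) = x^(2^(m+1)). Then the elements of order 2 in W are exactly the elements w(0,b) with b ≠ 0, so W contains exactly q − 1 involutions. -/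
/-!
Squaring in `W` gives `(a, b)² = (2a, 2b + π(a)a) = (0, π(a)a)` in characteristic `2`, and
`π(a)a = a^(2^(m+1)+1)` vanishes only for `a = 0`. So the elements with square `1` are the `(0, b)`,
and the involutions are those with `b ≠ 0`, in bijection with `GF(q)ˣ`.
-/

section TwistedProductLaw

variable {W R : Type*} [Group W] (e : W ≃ R × R) (k : ℕ)

def IsTwistedProductLaw [Semiring R] : Prop :=
  ∀ x y : W, e (x * y) = ((e x).1 + (e y).1, (e x).2 + (e y).2 + (e x).1 ^ k * (e y).1)

variable {e k}

theorem IsTwistedProductLaw.apply_one [Ring R] (he : IsTwistedProductLaw e k) : e 1 = (0, 0) := by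
  have h := he 1 1
  simp only [mul_one, Prod.ext_iff] at h
  obtain ⟨h₁, h₂⟩ := h
  have ha : (e 1).1 = 0 := left_eq_add.mp h₁
  rw [ha, mul_zero, add_zero] at h₂
  exact Prod.ext ha (left_eq_add.mp h₂)

theorem IsTwistedProductLaw.apply_sq [Ring R] [CharP R 2] (he : IsTwistedProductLaw e k)
    (x : W) : e (x ^ 2) = (0, (e x).1 ^ (k + 1)) := by
  rw [sq, he, CharTwo.add_self_eq_zero, CharTwo.add_self_eq_zero, zero_add, pow_succ]

theorem IsTwistedProductLaw.sq_eq_one_iff [Ring R] [CharP R 2] [IsReduced R]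
    (he : IsTwistedProductLaw e k) (x : W) : x ^ 2 = 1 ↔ (e x).1 = 0 := by
  rw [← e.apply_eq_iff_eq, he.apply_sq, he.apply_one, Prod.mk.injEq,
    pow_eq_zero_iff k.succ_ne_zero, and_iff_right rfl]

theorem IsTwistedProductLaw.orderOf_eq_two_iff [Ring R] [CharP R 2] [IsReduced R]
    (he : IsTwistedProductLaw e k) (x : W) : orderOf x = 2 ↔ (e x).1 = 0 ∧ (e x).2 ≠ 0 := by
  rw [orderOf_eq_prime_iff, he.sq_eq_one_iff, ne_eq, ← e.apply_eq_iff_eq, he.apply_one,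
    Prod.ext_iff]
  tauto

end TwistedProductLaw

theorem Equiv.natCard_setOf_fst_eq_zero_snd_ne_zero {W R G₀ : Type*} [Zero R] [GroupWithZero G₀]
    (e : W ≃ R × G₀) : Nat.card {x : W | (e x).1 = 0 ∧ (e x).2 ≠ 0} = Nat.card G₀ - 1 := by
  rw [← Nat.card_units]
  exact Nat.card_congr
    { toFun := fun x => (unitsEquivNeZero.symm ⟨(e x).2, x.2.2⟩)
      invFun := fun u => ⟨e.symm (0, u), by simp⟩
      left_inv := fun x => Subtype.ext <| e.injective <| Prod.ext (by simp [x.2.1]) (by simp)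
      right_inv := fun u => by ext; simp }

theorem stmt_5_general (m : ℕ) (F : Type*) [Field F] [Fintype F]
    (hF : Fintype.card F = 2 ^ (2 * m + 1))
    (W : Type*) [Group W] (e : W ≃ F × F)
    (he : ∀ x y : W, e (x * y) =
      ((e x).1 + (e y).1, (e x).2 + (e y).2 + (e x).1 ^ (2 ^ (m + 1)) * (e y).1)) :
    {x : W | orderOf x = 2} = {x : W | (e x).1 = 0 ∧ (e x).2 ≠ 0} ∧
      Nat.card {x : W | orderOf x = 2} = 2 ^ (2 * m + 1) - 1 := by
  have : CharP F 2 := charP_of_card_eq_prime_pow hF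
  have hinvolutions : {x : W | orderOf x = 2} = {x : W | (e x).1 = 0 ∧ (e x).2 ≠ 0} :=
    Set.ext fun x => IsTwistedProductLaw.orderOf_eq_two_iff he x
  refine ⟨hinvolutions, ?_⟩
  rw [hinvolutions, e.natCard_setOf_fst_eq_zero_snd_ne_zero, Nat.card_eq_fintype_card, hF]

/-- Let `q = 2^(2m+1)`, `m ≥ 1`, `F = GF(q)`, and let `W` be the group on `F × F` with
multiplication `(a,b)·(c,d) = (a+c, b+d+π(a)c)`, where `π(x) = x^(2^(m+1))`.
Then the elements of order `2` in `W` are exactly the `(0,b)` with `b ≠ 0`, so `W`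
contains exactly `q - 1` involutions. -/
theorem stmt_5 (m : ℕ) (hm : 1 ≤ m) (F : Type*) [Field F] [Fintype F]
    (hF : Fintype.card F = 2 ^ (2 * m + 1))
    (W : Type*) [Group W] [Fintype W] (e : W ≃ F × F)
    (he : ∀ x y : W, e (x * y) =
      ((e x).1 + (e y).1, (e x).2 + (e y).2 + (e x).1 ^ (2 ^ (m + 1)) * (e y).1)) :
    {x : W | orderOf x = 2} = {x : W | (e x).1 = 0 ∧ (e x).2 ≠ 0} ∧
      Nat.card {x : W | orderOf x = 2} = 2 ^ (2 * m + 1) - 1 :=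
  stmt_5_general m F hF W e he
end

section
/- Let q = 2^(2m+1) with m ≥ 1 and W the group on GF(q) × GF(q) with operation (a,b)·(c,d) = (a+c, b+d+π(a)c), π(x) = x^(2^(m+1)). Then every nontrivial element of W has order 2 or 4; in particular W has exponent 4 and contains exactly q^2 − q elements of order 4. -/
/-!
In characteristic 2 the square of `(a, b)` is `(0, π(a) a)`, and every element `(0, c)` squares
to the identity. Hence `x ^ 4 = 1` for all `x`, and `x` has order 4 exactly when `π(a) a ≠ 0`,
which for `π(a) = a ^ 2 ^ (m + 1)` means `a ≠ 0`: these are `(q - 1) q` elements.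
-/

def IsTwistedCoords {F W : Type*} [Add F] [Mul F] [Mul W] (π : F → F) (e : W ≃ F × F) : Prop :=
  ∀ x y : W, e (x * y) = ((e x).1 + (e y).1, (e x).2 + (e y).2 + π (e x).1 * (e y).1)

namespace IsTwistedCoords

variable {F W : Type*} [Ring F] [Group W] {π : F → F} {e : W ≃ F × F}

theorem apply_one (he : IsTwistedCoords π e) : e 1 = (0, 0) := by
  have h := he 1 1
  rw [mul_one] at h
  have h₁ : (e 1).1 = 0 := by
    simpa using (congrArg Prod.fst h).symm
  have h₂ : (e 1).2 = 0 := by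
    simpa [h₁] using (congrArg Prod.snd h).symm
  exact Prod.ext h₁ h₂

variable [CharP F 2]

theorem apply_sq (he : IsTwistedCoords π e) (x : W) :
    e (x ^ 2) = (0, π (e x).1 * (e x).1) := by
  rw [pow_two, he, CharTwo.add_self_eq_zero, CharTwo.add_self_eq_zero, zero_add]

theorem pow_four_eq_one (he : IsTwistedCoords π e) (x : W) : x ^ 4 = 1 := by
  apply e.injective
  rw [show 4 = 2 * 2 from rfl, pow_mul, he.apply_sq, he.apply_sq, he.apply_one, mul_zero]

theorem sq_eq_one_iff (he : IsTwistedCoords π e) (x : W) :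
    x ^ 2 = 1 ↔ π (e x).1 * (e x).1 = 0 := by
  rw [← e.injective.eq_iff, he.apply_sq, he.apply_one]
  simp

theorem orderOf_eq_two_or_four (he : IsTwistedCoords π e) {x : W} (hx : x ≠ 1) :
    orderOf x = 2 ∨ orderOf x = 4 := by
  by_cases hx2 : x ^ 2 = 1
  · exact .inl (orderOf_eq_prime hx2 hx)
  · exact .inr (orderOf_eq_prime_pow (p := 2) (n := 1) (by simpa using hx2) (he.pow_four_eq_one x))

theorem orderOf_eq_four_iff (he : IsTwistedCoords π e) (hπ : ∀ a, π a * a = 0 → a = 0) (x : W) :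
    orderOf x = 4 ↔ (e x).1 ≠ 0 := by
  have hx2 : x ^ 2 = 1 ↔ (e x).1 = 0 := by
    rw [he.sq_eq_one_iff]
    exact ⟨hπ _, fun h ↦ by rw [h, mul_zero]⟩
  constructor
  · intro h4 h0
    have := orderOf_dvd_of_pow_eq_one (hx2.mpr h0)
    rw [h4] at this
    exact absurd this (by decide)
  · intro h0
    exact orderOf_eq_prime_pow (p := 2) (n := 1) (by simpa [hx2] using h0) (he.pow_four_eq_one x)

theorem exponent_eq_four [Nontrivial F] (he : IsTwistedCoords π e)
    (hπ : ∀ a, π a * a = 0 → a = 0) : Monoid.exponent W = 4 := by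
  have h4 : orderOf (e.symm (1, 0)) = 4 := by
    simp [he.orderOf_eq_four_iff hπ]
  refine Nat.dvd_antisymm (Monoid.exponent_dvd_of_forall_pow_eq_one he.pow_four_eq_one) ?_
  exact h4 ▸ Monoid.order_dvd_exponent _

end IsTwistedCoords

theorem IsTwistedCoords.card_orderOf_eq_four {F W : Type*} [DivisionRing F] [CharP F 2] [Group W]
    {π : F → F} {e : W ≃ F × F} (he : IsTwistedCoords π e) (hπ : ∀ a, π a * a = 0 → a = 0) :
    Nat.card {x : W | orderOf x = 4} = (Nat.card F - 1) * Nat.card F := by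
  have hequiv : {x : W | orderOf x = 4} ≃ Fˣ × F :=
    (e.subtypeEquiv (he.orderOf_eq_four_iff hπ)).trans <|
      Equiv.prodSubtypeFstEquivSubtypeProd.trans (unitsEquivNeZero.symm.prodCongr (.refl F))
  rw [Nat.card_congr hequiv, Nat.card_prod, Nat.card_units]

theorem stmt_6_general (m : ℕ) (F : Type*) [Field F] [Fintype F]
    (hF : Fintype.card F = 2 ^ (2 * m + 1))
    (W : Type*) [Group W] (e : W ≃ F × F)
    (he : ∀ x y : W, e (x * y) =
      ((e x).1 + (e y).1, (e x).2 + (e y).2 + (e x).1 ^ (2 ^ (m + 1)) * (e y).1)) :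
    (∀ x : W, x ≠ 1 → orderOf x = 2 ∨ orderOf x = 4) ∧
      Monoid.exponent W = 4 ∧
      Nat.card {x : W | orderOf x = 4} = (2 ^ (2 * m + 1)) ^ 2 - 2 ^ (2 * m + 1) := by
  have : CharP F 2 := charP_of_card_eq_prime_pow hF
  have he : IsTwistedCoords (fun a : F ↦ a ^ 2 ^ (m + 1)) e := he
  have hπ : ∀ a : F, a ^ 2 ^ (m + 1) * a = 0 → a = 0 := fun a h ↦
    pow_eq_zero_iff (Nat.succ_ne_zero _) |>.mp (by rwa [pow_succ])
  refine ⟨fun x ↦ he.orderOf_eq_two_or_four, he.exponent_eq_four hπ, ?_⟩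
  rw [he.card_orderOf_eq_four hπ, Nat.card_eq_fintype_card, hF, Nat.sub_one_mul, sq]

/-- Let `q = 2^(2m+1)`, `m ≥ 1`, `F = GF(q)`, and let `W` be the group on `F × F` with
multiplication `(a,b)·(c,d) = (a+c, b+d+π(a)c)`, where `π(x) = x^(2^(m+1))`.
Then every nontrivial element of `W` has order `2` or `4`; in particular `W` has
exponent `4` and contains exactly `q^2 - q` elements of order `4`. -/
theorem stmt_6 (m : ℕ) (hm : 1 ≤ m) (F : Type*) [Field F] [Fintype F]
    (hF : Fintype.card F = 2 ^ (2 * m + 1))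
    (W : Type*) [Group W] [Fintype W] (e : W ≃ F × F)
    (he : ∀ x y : W, e (x * y) =
      ((e x).1 + (e y).1, (e x).2 + (e y).2 + (e x).1 ^ (2 ^ (m + 1)) * (e y).1)) :
    (∀ x : W, x ≠ 1 → orderOf x = 2 ∨ orderOf x = 4) ∧
      Monoid.exponent W = 4 ∧
      Nat.card {x : W | orderOf x = 4} = (2 ^ (2 * m + 1)) ^ 2 - 2 ^ (2 * m + 1) :=
  stmt_6_general m F hF W e he
end

section
/- Let S = Sz(q) with q = 2^(2m+1) ≥ 8, and let i > 1 divide q − 1. Then the number of elements of S of order i equals φ(i)·q^2(q^2+1)/2. -/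
/-!
Every element of order `i` lies in exactly one conjugate of `V`. The conjugates of `V` correspond
to the cosets of `N_S(V)`, so there are `|S : N_S(V)| = |S| / (2 (q - 1)) = q²(q² + 1) / 2` of
them, and each, being cyclic of order `q - 1`, contains exactly `φ(i)` elements of order `i`.
-/

open Pointwise MulAction
namespace Subgroup
variable {G : Type*} [Group G]

theorem map_conj_eq_toConjAct_smul (H : Subgroup G) (g : G) :
    H.map (MulAut.conj g).toMonoidHom = ConjAct.toConjAct g • H := rfl

theorem mem_orbit_conjAct_iff {H K : Subgroup G} :
    K ∈ orbit (ConjAct G) H ↔ ∃ g : G, K = H.map (MulAut.conj g).toMonoidHom := by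
  simp only [mem_orbit_iff, map_conj_eq_toConjAct_smul, eq_comm (a := K)]
  exact (ConjAct.toConjAct.surjective.exists (p := fun c : ConjAct G => c • H = K)).symm

theorem map_conj_eq_self_iff {H : Subgroup G} {g : G} :
    H.map (MulAut.conj g).toMonoidHom = H ↔ g ∈ normalizer (H : Set G) := by
  rw [mem_normalizer_iff]
  constructor
  · intro h n
    conv_rhs => rw [← h]
    exact (mem_map_iff_mem (MulAut.conj g).injective).symm
  · intro h
    ext x
    rw [mem_map_equiv, MulAut.conj_symm_apply, h]
    group

theorem index_normalizer_eq_ncard_orbit_conjAct (H : Subgroup G) :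
    (normalizer (H : Set G)).index = (orbit (ConjAct G) H).ncard := by
  have : normalizer (H : Set G) =
      (stabilizer (ConjAct G) H).comap (ConjAct.toConjAct (G := G)).toMonoidHom := by
    ext g
    exact map_conj_eq_self_iff.symm
  rw [← index_stabilizer, this]
  exact index_comap_of_surjective _ (ConjAct.toConjAct (G := G)).surjective

open Finset in
theorem card_filter_mem_and_orderOf_eq [Fintype G] (K : Subgroup G)
    [DecidablePred (· ∈ K)] [IsCyclic K] {i : ℕ} (hi : i ∣ Nat.card K) :
    #{x | x ∈ K ∧ orderOf x = i} = Nat.totient i := by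
  rw [← IsCyclic.card_orderOf_eq_totient (α := K) (by rwa [← Nat.card_eq_fintype_card]),
    ← card_map (Function.Embedding.subtype _)]
  congr 1
  ext x
  simp [and_comm]

open Finset in
theorem card_filter_mem_and_orderOf_eq_of_mem_orbit [Fintype G]
    {H K : Subgroup G} [DecidablePred (· ∈ K)] [IsCyclic H] (hK : K ∈ orbit (ConjAct G) H)
    {i : ℕ} (hi : i ∣ Nat.card H) :
    #{x | x ∈ K ∧ orderOf x = i} = Nat.totient i := by
  obtain ⟨c, rfl⟩ := hK
  have e := equivSMul c H
  have := e.isCyclic.mp ‹_›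
  exact card_filter_mem_and_orderOf_eq _ (by rwa [← Nat.card_congr e.toEquiv])

theorem card_orderOf_eq_of_existsUnique_mem_conj [Finite G] (H : Subgroup G) [IsCyclic H]
    {i : ℕ} (hi : i ∣ Nat.card H)
    (hunique : ∀ x : G, orderOf x = i → ∃! K, K ∈ orbit (ConjAct G) H ∧ x ∈ K) :
    Nat.card {x : G | orderOf x = i} = (normalizer (H : Set G)).index * Nat.totient i := by
  classical
  have := Fintype.ofFinite G
  set O := (orbit (ConjAct G) H).toFinite.toFinset
  have hcover : Finset.univ.filter (fun x : G => orderOf x = i) =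
      O.biUnion fun K => Finset.univ.filter fun x => x ∈ K ∧ orderOf x = i := by
    ext x
    simp only [O, Finset.mem_filter, Finset.mem_univ, true_and, Finset.mem_biUnion,
      Set.Finite.mem_toFinset]
    exact ⟨fun hx => ((hunique x hx).exists.imp fun K hK => ⟨hK.1, hK.2, hx⟩),
      fun ⟨_, _, _, hx⟩ => hx⟩
  have hdisj : (O : Set (Subgroup G)).PairwiseDisjoint
      fun K => Finset.univ.filter fun x => x ∈ K ∧ orderOf x = i := by
    intro K hK L hL hKL
    refine Finset.disjoint_left.mpr fun x hxK hxL => hKL ?_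
    simp only [Finset.mem_filter, Finset.mem_univ, true_and] at hxK hxL
    simp only [O, Finset.mem_coe, Set.Finite.mem_toFinset] at hK hL
    exact (hunique x hxK.2).unique ⟨hK, hxK.1⟩ ⟨hL, hxL.1⟩
  rw [Nat.card_coe_set_eq, Set.ncard_eq_toFinset_card', Set.toFinset_ofPred, hcover,
    Finset.card_biUnion hdisj,
    Finset.sum_congr rfl fun K hK => card_filter_mem_and_orderOf_eq_of_mem_orbit
      ((Set.Finite.mem_toFinset _).mp hK) hi,
    Finset.sum_const, smul_eq_mul, index_normalizer_eq_ncard_orbit_conjAct,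
    Set.ncard_eq_toFinset_card _ (orbit (ConjAct G) H).toFinite]

end Subgroup

open Subgroup in
theorem stmt_12_general (m : ℕ) (S : Type*) [Group S] [Fintype S]
    (hcard : Fintype.card S =
      (2 ^ (2 * m + 1)) ^ 2 * ((2 ^ (2 * m + 1)) ^ 2 + 1) * (2 ^ (2 * m + 1) - 1))
    (V : Subgroup S) (hcyc : IsCyclic V)
    (hV : Nat.card V = 2 ^ (2 * m + 1) - 1)
    (hindex : Subgroup.relIndex V (Subgroup.normalizer (V : Set S)) = 2)
    (hpart : ∀ x : S, x ≠ 1 → orderOf x ∣ 2 ^ (2 * m + 1) - 1 →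
      ∃! K : Subgroup S,
        (∃ g : S, K = Subgroup.map (MulAut.conj g).toMonoidHom V) ∧ x ∈ K)
    (i : ℕ) (hi : 1 < i) (hdvd : i ∣ 2 ^ (2 * m + 1) - 1) :
    Nat.card {x : S | orderOf x = i} =
      Nat.totient i * ((2 ^ (2 * m + 1)) ^ 2 * ((2 ^ (2 * m + 1)) ^ 2 + 1)) / 2 := by
  set q := 2 ^ (2 * m + 1)
  have hq : 1 ≤ q := Nat.one_le_two_pow
  have hcount := V.card_orderOf_eq_of_existsUnique_mem_conj (hV ▸ hdvd) fun x hx => by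
    have hx1 : x ≠ 1 := by rintro rfl; rw [orderOf_one] at hx; omega
    simpa only [mem_orbit_conjAct_iff] using hpart x hx1 (hx ▸ hdvd)
  have hN : V.relIndex (normalizer (V : Set S)) * (normalizer (V : Set S)).index * Nat.card V =
      Nat.card S := by
    rw [relIndex_mul_index le_normalizer, index_mul_card]
  rw [hindex, hV, Nat.card_eq_fintype_card, hcard] at hN
  rw [hcount, ← Nat.eq_of_mul_eq_mul_right (by omega) hN, mul_left_comm,
    Nat.mul_div_cancel_left _ two_pos, mul_comm]

/-- Let `S = Sz(q)`, `q = 2^(2m+1) ≥ 8`: a group of order `q^2(q^2+1)(q-1)` with a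
cyclic subgroup `V` of order `q-1` satisfying `|N_S(V) : V| = 2`, such that every
nontrivial element of order dividing `q-1` lies in exactly one conjugate of `V`.
Then for `i > 1` dividing `q-1`, the number of elements of order `i` in `S` equals
`φ(i)·q^2(q^2+1)/2`. -/
theorem stmt_12 (m : ℕ) (hm : 1 ≤ m) (S : Type*) [Group S] [Fintype S]
    (hcard : Fintype.card S =
      (2 ^ (2 * m + 1)) ^ 2 * ((2 ^ (2 * m + 1)) ^ 2 + 1) * (2 ^ (2 * m + 1) - 1))
    (V : Subgroup S) (hcyc : IsCyclic V)
    (hV : Nat.card V = 2 ^ (2 * m + 1) - 1)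
    (hindex : Subgroup.relIndex V (Subgroup.normalizer (V : Set S)) = 2)
    (hpart : ∀ x : S, x ≠ 1 → orderOf x ∣ 2 ^ (2 * m + 1) - 1 →
      ∃! K : Subgroup S,
        (∃ g : S, K = Subgroup.map (MulAut.conj g).toMonoidHom V) ∧ x ∈ K)
    (i : ℕ) (hi : 1 < i) (hdvd : i ∣ 2 ^ (2 * m + 1) - 1) :
    Nat.card {x : S | orderOf x = i} =
      Nat.totient i * ((2 ^ (2 * m + 1)) ^ 2 * ((2 ^ (2 * m + 1)) ^ 2 + 1)) / 2 :=
  stmt_12_general m S hcard V hcyc hV hindex hpart i hi hdvd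
end

section
/- Let S = Sz(q) with q = 2^(2m+1) ≥ 8, and let i > 1 divide q + 2^(m+1) + 1 (respectively q − 2^(m+1) + 1). Then the number of elements of S of order i equals φ(i)·q^2(q − 2^(m+1) + 1)(q−1)/4 (respectively φ(i)·q^2(q + 2^(m+1) + 1)(q−1)/4). -/
/-! Double count the pairs `(x, g)` with `orderOf x = i` and `x ∈ g U g⁻¹`. For fixed `g` there
are `φ(i)` such `x`, since `g U g⁻¹` is cyclic of order divisible by `i`. For fixed `x`, the
partition property makes `g U g⁻¹` the unique conjugate of `U` containing `x`, so the admissible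
`g` form one left coset of `N_S(U)`, which has `4 |U|` elements. Hence
`#{x | orderOf x = i} * 4 |U| = φ(i) |S|`, and `|S| / |U|` is read off from
`q² + 1 = (q + 2^(m+1) + 1)(q - 2^(m+1) + 1)`. -/

open Finset Pointwise

namespace Subgroup

variable {G : Type*} [Group G]

def IsPartitionedByConjugates (U : Subgroup G) : Prop :=
  ∀ x : G, x ≠ 1 → orderOf x ∣ Nat.card U →
    ∃! K : Subgroup G, (∃ g : G, K = MulAut.conj g • U) ∧ x ∈ K

lemma conj_smul_eq_conj_smul_iff {a b : G} {H : Subgroup G} :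
    MulAut.conj a • H = MulAut.conj b • H ↔ a⁻¹ * b ∈ normalizer (H : Set G) := by
  rw [mem_normalizer_iff_map_conj_eq]
  change _ ↔ MulAut.conj (a⁻¹ * b) • H = H
  rw [map_mul, map_inv, mul_smul, inv_smul_eq_iff, eq_comm]

lemma relIndex_mul_card_of_le {H K : Subgroup G} (h : H ≤ K) :
    H.relIndex K * Nat.card H = Nat.card K := by
  rw [← Nat.card_congr (subgroupOfEquivOfLe h).toEquiv]
  exact index_mul_card _

section Counting

open scoped Classical

variable [Fintype G]

lemma card_mem_orderOf_eq_totient {K : Subgroup G} [IsCyclic K] {i : ℕ} (hi : i ∣ Nat.card K) :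
    #{x | x ∈ K ∧ orderOf x = i} = i.totient := by
  rw [Nat.card_eq_fintype_card] at hi
  rw [← IsCyclic.card_orderOf_eq_totient hi]
  symm
  refine card_bij' (fun a _ => (a : G)) (fun x hx => ⟨x, (mem_filter.1 hx).2.1⟩) ?_ ?_ ?_ ?_
  · intro a ha
    simpa using ha
  · intro x hx
    simpa using (mem_filter.1 hx).2.2
  · exact fun _ _ => rfl
  · exact fun _ _ => rfl

lemma card_conj_smul_mem_eq_card_normalizer {H : Subgroup G} {x : G}
    (huniq : ∃! K : Subgroup G, (∃ g : G, K = MulAut.conj g • H) ∧ x ∈ K) :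
    #{g : G | x ∈ MulAut.conj g • H} = Nat.card (normalizer (H : Set G)) := by
  obtain ⟨_, ⟨⟨g₀, rfl⟩, hx₀⟩, huniq⟩ := huniq
  have hfiber : ∀ g, x ∈ MulAut.conj g • H ↔ g₀⁻¹ * g ∈ normalizer (H : Set G) := fun g =>
    ⟨fun hx => conj_smul_eq_conj_smul_iff.1 (huniq _ ⟨⟨g, rfl⟩, hx⟩).symm,
      fun hg => conj_smul_eq_conj_smul_iff.2 hg ▸ hx₀⟩
  rw [Nat.card_eq_fintype_card, Fintype.card_subtype]
  exact card_equiv (Equiv.mulLeft g₀⁻¹) (by simp [hfiber])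

lemma card_orderOf_mul_card_normalizer_eq {U : Subgroup G} [IsCyclic U]
    (hpart : U.IsPartitionedByConjugates)
    {i : ℕ} (hi : 1 < i) (hiU : i ∣ Nat.card U) :
    Nat.card {x : G | orderOf x = i} * Nat.card (normalizer (U : Set G)) =
      i.totient * Nat.card G := by
  have hcount := card_mul_eq_card_mul (s := {x : G | orderOf x = i}) (t := (univ : Finset G))
    (m := Nat.card (normalizer (U : Set G))) (n := i.totient)
    (fun x g => x ∈ MulAut.conj g • U) (fun x hx => ?_) (fun g _ => ?_)
  · rwa [card_univ, ← Fintype.card_subtype, ← Nat.card_eq_fintype_card, ← Nat.card_eq_fintype_card,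
      mul_comm (Nat.card G)] at hcount
  · have hx : orderOf x = i := (mem_filter.1 hx).2
    exact card_conj_smul_mem_eq_card_normalizer
      (hpart x (by rintro rfl; simp [← hx] at hi) (hx ▸ hiU))
  · have : IsCyclic ↥(MulAut.conj g • U) := isCyclic_of_surjective _ (equivSMul _ U).surjective
    rw [bipartiteBelow, filter_filter]
    simp_rw [and_comm (a := orderOf _ = i)]
    exact card_mem_orderOf_eq_totient (Nat.card_congr (equivSMul (MulAut.conj g) U).toEquiv ▸ hiU)

lemma card_orderOf_eq_totient_mul_div {U : Subgroup G} [IsCyclic U]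
    (hpart : U.IsPartitionedByConjugates)
    {i : ℕ} (hi : 1 < i) (hiU : i ∣ Nat.card U) {M : ℕ} (hG : Nat.card G = Nat.card U * M) :
    Nat.card {x : G | orderOf x = i} = i.totient * M / U.relIndex (normalizer (U : Set G)) := by
  have hcount := card_orderOf_mul_card_normalizer_eq hpart hi hiU
  rw [← relIndex_mul_card_of_le le_normalizer, hG] at hcount
  have hpos : 0 < U.relIndex (normalizer (U : Set G)) := Nat.pos_of_ne_zero index_ne_zero_of_finite
  refine (Nat.div_eq_of_eq_mul_left hpos ?_).symm
  refine Nat.eq_of_mul_eq_mul_right (Nat.card_pos (α := U)) ?_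
  linarith

end Counting

end Subgroup

lemma Nat.add_add_one_mul_sub_add_one_of_sq_eq_two_mul {q r : ℕ} (h : r ^ 2 = 2 * q) :
    (q + r + 1) * (q - r + 1) = q ^ 2 + 1 := by
  have hrq : r ≤ q := by nlinarith
  zify [hrq] at h ⊢
  linear_combination (-1 : ℤ) * h

theorem stmt_13_general (m : ℕ) (S : Type*) [Group S] [Fintype S]
    (hcard : Fintype.card S =
      (2 ^ (2 * m + 1)) ^ 2 * ((2 ^ (2 * m + 1)) ^ 2 + 1) * (2 ^ (2 * m + 1) - 1))
    (U₁ U₂ : Subgroup S) (hcyc₁ : IsCyclic U₁) (hcyc₂ : IsCyclic U₂)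
    (hU₁ : Nat.card U₁ = 2 ^ (2 * m + 1) + 2 ^ (m + 1) + 1)
    (hU₂ : Nat.card U₂ = 2 ^ (2 * m + 1) - 2 ^ (m + 1) + 1)
    (hindex₁ : Subgroup.relIndex U₁ (Subgroup.normalizer (U₁ : Set S)) = 4)
    (hindex₂ : Subgroup.relIndex U₂ (Subgroup.normalizer (U₂ : Set S)) = 4)
    (hpart₁ : ∀ x : S, x ≠ 1 → orderOf x ∣ 2 ^ (2 * m + 1) + 2 ^ (m + 1) + 1 →
      ∃! K : Subgroup S,
        (∃ g : S, K = Subgroup.map (MulAut.conj g).toMonoidHom U₁) ∧ x ∈ K)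
    (hpart₂ : ∀ x : S, x ≠ 1 → orderOf x ∣ 2 ^ (2 * m + 1) - 2 ^ (m + 1) + 1 →
      ∃! K : Subgroup S,
        (∃ g : S, K = Subgroup.map (MulAut.conj g).toMonoidHom U₂) ∧ x ∈ K) :
    (∀ i : ℕ, 1 < i → i ∣ 2 ^ (2 * m + 1) + 2 ^ (m + 1) + 1 →
      Nat.card {x : S | orderOf x = i} =
        Nat.totient i * ((2 ^ (2 * m + 1)) ^ 2 * (2 ^ (2 * m + 1) - 2 ^ (m + 1) + 1) *
          (2 ^ (2 * m + 1) - 1)) / 4) ∧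
    (∀ i : ℕ, 1 < i → i ∣ 2 ^ (2 * m + 1) - 2 ^ (m + 1) + 1 →
      Nat.card {x : S | orderOf x = i} =
        Nat.totient i * ((2 ^ (2 * m + 1)) ^ 2 * (2 ^ (2 * m + 1) + 2 ^ (m + 1) + 1) *
          (2 ^ (2 * m + 1) - 1)) / 4) := by
  have hfactor := Nat.add_add_one_mul_sub_add_one_of_sq_eq_two_mul
    (show (2 ^ (m + 1)) ^ 2 = 2 * 2 ^ (2 * m + 1) by ring)
  have hS : Nat.card S =
      (2 ^ (2 * m + 1)) ^ 2 * ((2 ^ (2 * m + 1)) ^ 2 + 1) * (2 ^ (2 * m + 1) - 1) := by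
    rw [Nat.card_eq_fintype_card, hcard]
  refine ⟨fun i hi hiU => ?_, fun i hi hiU => ?_⟩
  · rw [← hindex₁]
    refine Subgroup.card_orderOf_eq_totient_mul_div
      (fun x hx hdvd => hpart₁ x hx (hU₁ ▸ hdvd)) hi (hU₁ ▸ hiU) ?_
    rw [hS, hU₁, ← hfactor]
    ring
  · rw [← hindex₂]
    refine Subgroup.card_orderOf_eq_totient_mul_div
      (fun x hx hdvd => hpart₂ x hx (hU₂ ▸ hdvd)) hi (hU₂ ▸ hiU) ?_
    rw [hS, hU₂, ← hfactor]
    ring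

/-- Let `S = Sz(q)`, `q = 2^(2m+1) ≥ 8`: a group of order `q^2(q^2+1)(q-1)` with cyclic
subgroups `U₁`, `U₂` of orders `q + 2^(m+1) + 1` and `q - 2^(m+1) + 1` each satisfying
`|N_S(Uₜ) : Uₜ| = 4`, such that every nontrivial element of order dividing `|Uₜ|` lies
in exactly one conjugate of `Uₜ`. Then for `i > 1` dividing `q + 2^(m+1) + 1`
(respectively `q - 2^(m+1) + 1`), the number of elements of order `i` in `S` equals
`φ(i)·q^2(q - 2^(m+1) + 1)(q-1)/4` (respectively `φ(i)·q^2(q + 2^(m+1) + 1)(q-1)/4`). -/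
theorem stmt_13 (m : ℕ) (hm : 1 ≤ m) (S : Type*) [Group S] [Fintype S]
    (hcard : Fintype.card S =
      (2 ^ (2 * m + 1)) ^ 2 * ((2 ^ (2 * m + 1)) ^ 2 + 1) * (2 ^ (2 * m + 1) - 1))
    (U₁ U₂ : Subgroup S) (hcyc₁ : IsCyclic U₁) (hcyc₂ : IsCyclic U₂)
    (hU₁ : Nat.card U₁ = 2 ^ (2 * m + 1) + 2 ^ (m + 1) + 1)
    (hU₂ : Nat.card U₂ = 2 ^ (2 * m + 1) - 2 ^ (m + 1) + 1)
    (hindex₁ : Subgroup.relIndex U₁ (Subgroup.normalizer (U₁ : Set S)) = 4)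
    (hindex₂ : Subgroup.relIndex U₂ (Subgroup.normalizer (U₂ : Set S)) = 4)
    (hpart₁ : ∀ x : S, x ≠ 1 → orderOf x ∣ 2 ^ (2 * m + 1) + 2 ^ (m + 1) + 1 →
      ∃! K : Subgroup S,
        (∃ g : S, K = Subgroup.map (MulAut.conj g).toMonoidHom U₁) ∧ x ∈ K)
    (hpart₂ : ∀ x : S, x ≠ 1 → orderOf x ∣ 2 ^ (2 * m + 1) - 2 ^ (m + 1) + 1 →
      ∃! K : Subgroup S,
        (∃ g : S, K = Subgroup.map (MulAut.conj g).toMonoidHom U₂) ∧ x ∈ K) :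
    (∀ i : ℕ, 1 < i → i ∣ 2 ^ (2 * m + 1) + 2 ^ (m + 1) + 1 →
      Nat.card {x : S | orderOf x = i} =
        Nat.totient i * ((2 ^ (2 * m + 1)) ^ 2 * (2 ^ (2 * m + 1) - 2 ^ (m + 1) + 1) *
          (2 ^ (2 * m + 1) - 1)) / 4) ∧
    (∀ i : ℕ, 1 < i → i ∣ 2 ^ (2 * m + 1) - 2 ^ (m + 1) + 1 →
      Nat.card {x : S | orderOf x = i} =
        Nat.totient i * ((2 ^ (2 * m + 1)) ^ 2 * (2 ^ (2 * m + 1) + 2 ^ (m + 1) + 1) *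
          (2 ^ (2 * m + 1) - 1)) / 4) :=
  stmt_13_general m S hcard U₁ U₂ hcyc₁ hcyc₂ hU₁ hU₂ hindex₁ hindex₂ hpart₁ hpart₂
end

section
/- In S = Sz(q) with q = 2^(2m+1) ≥ 8, if 2 is an isolated vertex of the prime graph (no element of order 2p for odd prime p), then for every odd element order i of S, q^2 divides m_i(S), the number of elements of order i. -/
/-!
A Sylow 2-subgroup `P` of `S` has order `q ^ 2`, since `q ^ 2 + 1` and `q - 1` are odd. Let `P` act
by conjugation on the elements of a fixed odd order `i > 1`. If some `g ≠ 1` in `P` centralised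
such an `x`, then the involution among the powers of `g` times an element of odd prime order `p`
among the powers of `x` would have order `2 * p`. So the action is free and `q ^ 2` divides the
number of such elements.
-/

theorem MulAction.natCard_dvd_natCard_of_stabilizer_eq_bot {G X : Type*} [Group G]
    [MulAction G X] (h : ∀ x : X, stabilizer G x = ⊥) : Nat.card G ∣ Nat.card X := by
  rw [Nat.card_congr (selfEquivOrbitsQuotientProd h), Nat.card_prod]
  exact dvd_mul_left _ _

theorem Nat.factorization_two_pow_mul_of_odd (a : ℕ) {b : ℕ} (hb : Odd b) :
    (2 ^ a * b).factorization 2 = a := by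
  rw [Nat.factorization_mul (by positivity) (by grind), Finsupp.add_apply,
    Nat.prime_two.factorization_pow, Finsupp.single_eq_same,
    Nat.factorization_eq_zero_of_not_dvd hb.not_two_dvd_nat, add_zero]

section

variable {G : Type*} [Group G]

theorem exists_orderOf_eq_two_mul_prime_of_commute {g x : G} (hgx : Commute g x)
    (hg₀ : orderOf g ≠ 0) (hg : 2 ∣ orderOf g) (hx : Odd (orderOf x))
    (hx₁ : 1 < orderOf x) :
    ∃ p, p.Prime ∧ Odd p ∧ ∃ y : G, orderOf y = 2 * p := by
  set p := (orderOf x).minFac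
  have hp_odd : Odd p := hx.of_dvd_nat (Nat.minFac_dvd _)
  have ht : orderOf (g ^ (orderOf g / 2)) = 2 := orderOf_pow_orderOf_div hg₀ hg
  have hz : orderOf (x ^ (orderOf x / p)) = p :=
    orderOf_pow_orderOf_div (by positivity) (Nat.minFac_dvd _)
  have hcop : (orderOf (g ^ (orderOf g / 2))).Coprime (orderOf (x ^ (orderOf x / p))) := by
    rw [ht, hz]
    exact Nat.coprime_two_left.mpr hp_odd
  refine ⟨p, Nat.minFac_prime hx₁.ne', hp_odd, g ^ (orderOf g / 2) * x ^ (orderOf x / p), ?_⟩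
  rw [((hgx.pow_left _).pow_right _).orderOf_mul_eq_mul_orderOf_of_coprime hcop, ht, hz]

variable (G) in
def elementsOfOrder (n : ℕ) : SubMulAction (ConjAct G) G where
  carrier := {x | orderOf x = n}
  smul_mem' c x hx := by
    rwa [Set.mem_ofPred_eq, ConjAct.smul_eq_mulAut_conj, MulEquiv.orderOf_eq]

theorem stabilizer_elementsOfOrder_eq_bot {H : Subgroup (ConjAct G)} (hH : IsPGroup 2 H)
    (hiso : ∀ p : ℕ, p.Prime → Odd p → ¬ ∃ y : G, orderOf y = 2 * p)
    {n : ℕ} (hn : Odd n) (hn₁ : 1 < n) (x : elementsOfOrder G n) :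
    MulAction.stabilizer H x = ⊥ := by
  refine (Subgroup.eq_bot_iff_forall _).mpr fun h hh => ?_
  by_contra hne
  have hx : orderOf (x : G) = n := x.2
  have hcomm : Commute (ConjAct.ofConjAct (h : ConjAct G)) x := by
    have := congrArg Subtype.val hh
    rw [Subgroup.smul_def, SubMulAction.val_smul, ConjAct.smul_def] at this
    exact mul_inv_eq_iff_eq_mul.mp this
  obtain ⟨k, hk⟩ := (IsPGroup.iff_orderOf.mp hH) h
  have hk₀ : k ≠ 0 := by
    rintro rfl
    exact hne (orderOf_eq_one_iff.mp hk)
  have hord : orderOf (ConjAct.ofConjAct (h : ConjAct G)) = 2 ^ k := by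
    rw [MulEquiv.orderOf_eq, Subgroup.orderOf_coe, hk]
  obtain ⟨p, hp, hp_odd, hy⟩ := exists_orderOf_eq_two_mul_prime_of_commute hcomm
    (by simp [hord]) (hord ▸ dvd_pow_self 2 hk₀) (by rwa [hx]) (by rwa [hx])
  exact hiso p hp hp_odd hy

end

theorem stmt_14_general (m : ℕ) (S : Type*) [Group S] [Fintype S]
    (hcard : Fintype.card S =
      (2 ^ (2 * m + 1)) ^ 2 * ((2 ^ (2 * m + 1)) ^ 2 + 1) * (2 ^ (2 * m + 1) - 1))
    (hiso : ∀ p : ℕ, p.Prime → Odd p → ¬ ∃ x : S, orderOf x = 2 * p) :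
    ∀ i : ℕ, Odd i → 1 < i → (∃ x : S, orderOf x = i) →
      (2 ^ (2 * m + 1)) ^ 2 ∣ Nat.card {x : S | orderOf x = i} := by
  intro i hi hi₁ _
  -- taken in `ConjAct S` so that it acts on `S` by conjugation
  obtain ⟨P⟩ : Nonempty (Sylow 2 (ConjAct S)) := inferInstance
  have hq : Even (2 ^ (2 * m + 1)) := Nat.even_pow.mpr ⟨even_two, by omega⟩
  have hodd : Odd (((2 ^ (2 * m + 1)) ^ 2 + 1) * (2 ^ (2 * m + 1) - 1)) :=
    ((hq.pow_of_ne_zero two_ne_zero).add_one).mul (Nat.Even.sub_odd Nat.one_le_two_pow hq odd_one)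
  have hP : Nat.card P = 2 ^ ((2 * m + 1) * 2) := by
    have h2 := Nat.factorization_two_pow_mul_of_odd ((2 * m + 1) * 2) hodd
    rw [pow_mul] at h2
    rw [P.card_eq_multiplicity, Nat.card_congr ConjAct.ofConjAct.toEquiv, Nat.card_eq_fintype_card,
      hcard, mul_assoc, h2]
  show _ ∣ Nat.card (elementsOfOrder S i)
  rw [← pow_mul, ← hP]
  exact MulAction.natCard_dvd_natCard_of_stabilizer_eq_bot
    (stabilizer_elementsOfOrder_eq_bot P.isPGroup' hiso hi hi₁)

/-- Let `S` be a group of order `q^2(q^2+1)(q-1)` with `q = 2^(2m+1) ≥ 8` (such as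
`Sz(q)`). If `2` is an isolated vertex of the prime graph of `S` (no element of order
`2p` for any odd prime `p`), then for every odd element order `i > 1` of `S`, `q^2`
divides the number of elements of `S` of order `i`. -/
theorem stmt_14 (m : ℕ) (hm : 1 ≤ m) (S : Type*) [Group S] [Fintype S]
    (hcard : Fintype.card S =
      (2 ^ (2 * m + 1)) ^ 2 * ((2 ^ (2 * m + 1)) ^ 2 + 1) * (2 ^ (2 * m + 1) - 1))
    (hiso : ∀ p : ℕ, p.Prime → Odd p → ¬ ∃ x : S, orderOf x = 2 * p) :
    ∀ i : ℕ, Odd i → 1 < i → (∃ x : S, orderOf x = i) →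
      (2 ^ (2 * m + 1)) ^ 2 ∣ Nat.card {x : S | orderOf x = i} :=
  stmt_14_general m S hcard hiso
end
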